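/- arXiv:2201.00797 — 2 statements merged into one kernel-verified Lean document; each statement's English description precedes it below -/
import Mathlib

section
/- Let X = (X_n)_{n∈ℤ} be a discrete white noise and let α > 0. Then ℙ(sup_{n∈ℤ} |X_n|/(1+|n|)^α < ∞) = 1 if and only if Σ_{n≥0} ℙ(|X_0| ≥ n^α) < ∞. -/
open MeasureTheory ProbabilityTheory Filter
open scoped ENNReal

/-! Write `a j = ℙ(j ^ α ≤ |X₀|)`, an antitone sequence. The exceedance events
`{(1 + |k|) ^ α ≤ |X_k|}` have probabilities `a (|k| + 1)`, so if `∑ a` converges the first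
Borel–Cantelli lemma leaves almost surely only finitely many of them, and finitely many
exceedances give a bound. If `∑ a` diverges, then by monotonicity so does `∑ₙ a (m (n + 1))` for
every `m ≥ 1`, and the second Borel–Cantelli lemma for the independent events
`{(m (n + 1)) ^ α ≤ |Xₙ|}` shows that almost surely `|Xₙ| ≥ m ^ α (1 + n) ^ α` infinitely often. -/

lemma ENNReal.tsum_le_mul_tsum_comp_mul {a : ℕ → ℝ≥0∞} (ha : Antitone a) {m : ℕ} (hm : m ≠ 0) :
    ∑' j, a j ≤ m * ∑' q, a (m * q) := by
  have : NeZero m := ⟨hm⟩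
  calc ∑' j, a j = ∑' p : ℕ × Fin m, a (p.1 * m + p.2) :=
        ((Nat.divModEquiv m).symm.tsum_eq a).symm
    _ ≤ ∑' p : ℕ × Fin m, a (m * p.1) :=
        ENNReal.tsum_le_tsum fun p => ha (by rw [mul_comm]; exact Nat.le_add_right _ _)
    _ = ∑' q, m * a (m * q) := by
        rw [ENNReal.tsum_prod']
        simp [tsum_fintype]
    _ = m * ∑' q, a (m * q) := ENNReal.tsum_mul_left

lemma ENNReal.tsum_comp_mul_eq_top {a : ℕ → ℝ≥0∞} (ha : Antitone a) {m : ℕ} (hm : m ≠ 0)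
    (h : ∑' j, a j = ∞) : ∑' q, a (m * q) = ∞ := by
  by_contra hfin
  exact ENNReal.mul_ne_top (ENNReal.natCast_ne_top m) hfin
    (top_unique (h ▸ ENNReal.tsum_le_mul_tsum_comp_mul ha hm))

lemma ENNReal.tsum_int_natAbs_succ_le (a : ℕ → ℝ≥0∞) :
    ∑' k : ℤ, a (k.natAbs + 1) ≤ 2 * ∑' n, a n := by
  rw [tsum_of_nat_of_neg_add_one ENNReal.summable ENNReal.summable, two_mul]
  have hneg (n : ℕ) : (-((n : ℤ) + 1)).natAbs + 1 = n + 2 := by omega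
  simp only [Int.natAbs_natCast, hneg]
  exact add_le_add (ENNReal.tsum_comp_le_tsum_of_injective (add_left_injective 1) a)
    (ENNReal.tsum_comp_le_tsum_of_injective (add_left_injective 2) a)

lemma exists_abs_le_mul_of_finite_setOf_le {ι : Type*} {x w : ι → ℝ} (hw : ∀ i, 1 ≤ w i)
    (hfin : {i | w i ≤ |x i|}.Finite) : ∃ C, ∀ i, |x i| ≤ C * w i := by
  obtain ⟨M, hM⟩ := (hfin.image fun i => |x i|).bddAbove
  refine ⟨max 1 M, fun i => ?_⟩
  by_cases hi : w i ≤ |x i|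
  · calc |x i| ≤ M := hM ⟨i, hi, rfl⟩
      _ ≤ max 1 M := le_max_right _ _
      _ ≤ max 1 M * w i := le_mul_of_one_le_right (zero_le_one.trans (le_max_left _ _)) (hw i)
  · calc |x i| ≤ w i := (not_le.mp hi).le
      _ ≤ max 1 M * w i := le_mul_of_one_le_left (zero_le_one.trans (hw i)) (le_max_left _ _)

lemma ProbabilityTheory.iIndepFun.iIndepSet_preimage {Ω ι β : Type*} [MeasurableSpace Ω]
    [MeasurableSpace β] {P : Measure Ω} {X : ι → Ω → β} (hX : iIndepFun X P)
    (hmeas : ∀ i, Measurable (X i)) {T : ι → Set β} (hT : ∀ i, MeasurableSet (T i)) :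
    iIndepSet (fun i => X i ⁻¹' T i) P := by
  rw [iIndepSet_iff_meas_biInter fun i => hmeas i (hT i)]
  exact fun s => hX.meas_biInter fun i _ => ⟨T i, hT i, rfl⟩

lemma exists_nat_ne_zero_lt_rpow {α : ℝ} (hα : 0 < α) (c : ℝ) :
    ∃ m : ℕ, m ≠ 0 ∧ c < (m : ℝ) ^ α :=
  (((tendsto_rpow_atTop hα).comp tendsto_natCast_atTop_atTop).eventually_gt_atTop c).and
    (eventually_ne_atTop 0) |>.exists.imp fun _ h => ⟨h.2, h.1⟩

lemma ProbabilityTheory.IdentDistrib.measure_le_abs_eq {Ω Ω' : Type*} [MeasurableSpace Ω]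
    [MeasurableSpace Ω'] {μ : Measure Ω} {ν : Measure Ω'} {Y : Ω → ℝ} {Z : Ω' → ℝ}
    (h : IdentDistrib Y Z μ ν) (c : ℝ) : μ {ω | c ≤ |Y ω|} = ν {ω | c ≤ |Z ω|} :=
  h.measure_mem_eq (measurableSet_le measurable_const measurable_abs)

section WhiteNoise

variable {Ω : Type*} [MeasurableSpace Ω] {P : Measure Ω} {X : ℤ → Ω → ℝ} {α : ℝ}

lemma ae_exists_abs_le_mul_rpow (hident : ∀ n : ℤ, IdentDistrib (X n) (X 0) P P) (hα : 0 ≤ α)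
    (hsum : ∑' n : ℕ, P {ω | (n : ℝ) ^ α ≤ |X 0 ω|} ≠ ∞) :
    ∀ᵐ ω ∂P, ∃ C : ℝ, ∀ n : ℤ, |X n ω| ≤ C * (1 + |(n : ℝ)|) ^ α := by
  have hexceed : ∑' k : ℤ, P {ω | (1 + |(k : ℝ)|) ^ α ≤ |X k ω|} ≠ ∞ := by
    have htail (k : ℤ) : P {ω | (1 + |(k : ℝ)|) ^ α ≤ |X k ω|} =
        P {ω | ((k.natAbs + 1 : ℕ) : ℝ) ^ α ≤ |X 0 ω|} := by
      rw [(hident k).measure_le_abs_eq, Nat.cast_succ, Nat.cast_natAbs, Int.cast_abs, add_comm]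
    simp_rw [htail]
    exact ne_top_of_le_ne_top (ENNReal.mul_ne_top ENNReal.ofNat_ne_top hsum)
      (ENNReal.tsum_int_natAbs_succ_le _)
  filter_upwards [ae_finite_setOfPred_mem hexceed] with ω hω
  exact exists_abs_le_mul_of_finite_setOf_le
    (fun n => Real.one_le_rpow (le_add_of_nonneg_right (abs_nonneg _)) hα) hω

lemma measure_forall_abs_le_mul_rpow_eq_zero [IsProbabilityMeasure P]
    (hmeas : ∀ n, Measurable (X n)) (hindep : iIndepFun X P)
    (hident : ∀ n : ℤ, IdentDistrib (X n) (X 0) P P) (hα : 0 < α)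
    (hdiv : ∑' n : ℕ, P {ω | (n : ℝ) ^ α ≤ |X 0 ω|} = ∞) (c : ℝ) :
    P {ω | ∀ n : ℤ, |X n ω| ≤ c * (1 + |(n : ℝ)|) ^ α} = 0 := by
  obtain ⟨m, hm, hcm⟩ := exists_nat_ne_zero_lt_rpow hα c
  set T : ℕ → Set ℝ := fun n => {x | ((m * (n + 1) : ℕ) : ℝ) ^ α ≤ |x|}
  have hT (n : ℕ) : MeasurableSet (T n) := measurableSet_le measurable_const measurable_abs
  have hanti : Antitone fun j : ℕ => P {ω | (j : ℝ) ^ α ≤ |X 0 ω|} := fun i j hij =>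
    measure_mono fun ω hω =>
      (Real.rpow_le_rpow (Nat.cast_nonneg _) (Nat.cast_le.2 hij) hα.le).trans hω
  have hsum : ∑' n : ℕ, P (X n ⁻¹' T n) = ∞ :=
    calc ∑' n : ℕ, P (X n ⁻¹' T n)
        = ∑' n : ℕ, P {ω | ((m * (n + 1) : ℕ) : ℝ) ^ α ≤ |X 0 ω|} :=
          tsum_congr fun n => (hident n).measure_le_abs_eq _
      _ = ∞ := ENNReal.tsum_add_one_eq_top (ENNReal.tsum_comp_mul_eq_top hanti hm hdiv)
          (measure_ne_top _ _)
  have hfreq : P (limsup (fun n : ℕ => X n ⁻¹' T n) atTop) = 1 :=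
    measure_limsup_eq_one (fun n => hmeas n (hT n))
      ((hindep.precomp Nat.cast_injective).iIndepSet_preimage (fun n => hmeas n) hT) hsum
  refine measure_mono_null ?_ ((prob_compl_eq_zero_iff
    (MeasurableSet.measurableSet_limsup fun n => hmeas n (hT n))).2 hfreq)
  intro ω hω hmem
  obtain ⟨n, hn⟩ := (mem_limsup_iff_frequently_mem.1 hmem).exists
  refine lt_irrefl (((m * (n + 1) : ℕ) : ℝ) ^ α) ?_
  calc ((m * (n + 1) : ℕ) : ℝ) ^ α ≤ |X n ω| := hn
    _ ≤ c * (1 + n) ^ α := by simpa using hω n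
    _ < m ^ α * (1 + n) ^ α := by gcongr
    _ = ((m * (n + 1) : ℕ) : ℝ) ^ α := by
      push_cast; rw [Real.mul_rpow (by positivity) (by positivity), add_comm (n : ℝ)]

lemma measure_exists_abs_le_mul_rpow_eq_zero [IsProbabilityMeasure P]
    (hmeas : ∀ n, Measurable (X n)) (hindep : iIndepFun X P)
    (hident : ∀ n : ℤ, IdentDistrib (X n) (X 0) P P) (hα : 0 < α)
    (hdiv : ∑' n : ℕ, P {ω | (n : ℝ) ^ α ≤ |X 0 ω|} = ∞) :
    P {ω | ∃ C : ℝ, ∀ n : ℤ, |X n ω| ≤ C * (1 + |(n : ℝ)|) ^ α} = 0 := by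
  refine measure_mono_null (fun ω ⟨C, hC⟩ => ?_) (measure_iUnion_null fun k : ℕ =>
    measure_forall_abs_le_mul_rpow_eq_zero hmeas hindep hident hα hdiv k)
  obtain ⟨k, hk⟩ := exists_nat_ge C
  exact Set.mem_iUnion.2 ⟨k, fun n => (hC n).trans (by gcongr)⟩

end WhiteNoise

/-- For a discrete white noise `X` and `α > 0`, the event
`sup_n |X_n|/(1+|n|)^α < ∞` has probability `1` iff `Σ_{n ≥ 0} ℙ(|X_0| ≥ n^α) < ∞`. -/
theorem weighted_linfty_iff_summable_tail
    {Ω : Type*} [MeasurableSpace Ω] (P : Measure Ω) [IsProbabilityMeasure P]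
    (X : ℤ → Ω → ℝ) (hmeas : ∀ n, Measurable (X n))
    (hindep : iIndepFun X P)
    (hident : ∀ n : ℤ, IdentDistrib (X n) (X 0) P P)
    (α : ℝ) (hα : 0 < α) :
    P {ω | ∃ C : ℝ, ∀ n : ℤ, |X n ω| ≤ C * (1 + |(n : ℝ)|) ^ α} = 1 ↔
    (∑' n : ℕ, P {ω | (n : ℝ) ^ α ≤ |X 0 ω|}) < ⊤ := by
  constructor
  · intro h
    by_contra hdiv
    rw [not_lt, top_le_iff] at hdiv
    rw [measure_exists_abs_le_mul_rpow_eq_zero hmeas hindep hident hα hdiv] at h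
    exact zero_ne_one h
  · intro h
    exact (measure_congr (ae_eq_univ.2 (ae_exists_abs_le_mul_rpow hident hα.le h.ne))).trans
      measure_univ
end

section
/- Let ν be a measure on ℝ with ν({0}) = 0 satisfying ∫ min(1, t²) ν(dt) < ∞ (a Lévy measure), let μ ∈ ℝ, σ² ≥ 0, and define the characteristic exponent Ψ(ξ) = iμξ − σ²ξ²/2 + ∫_{ℝ∖{0}} (e^{iξt} − 1 − iξt·1_{|t|<1}) ν(dt) for ξ ∈ ℝ. If there exists ε with 0 < ε ≤ 1 such that ∫_{|t|≥1} |t|^ε ν(dt) < ∞, then there exists a constant C > 0 such that |Ψ(ξ)| ≤ C (|ξ|^ε + |ξ|²) for all ξ ∈ ℝ. -/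
/-!
Split the Lévy integral at `|t| = 1`. On the unit ball `‖e^{ix} - 1 - ix‖ ≤ 2x²` bounds the
integrand by `2ξ² min(1, t²)`; off it, `‖e^{ix} - 1‖ ≤ min(|x|, 2) ≤ 2|x|^ε` bounds it by
`2|ξ|^ε |t|^ε`, which the moment condition makes integrable. The drift term `|μ||ξ|` is absorbed
because `|ξ| ≤ |ξ|^ε + ξ²` for `ε ≤ 1`.
-/

open MeasureTheory Complex

noncomputable def levyIntegrand (ξ t : ℝ) : ℂ :=
  exp (I * ξ * t) - 1 - I * ξ * t * (if |t| < 1 then 1 else 0)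

lemma norm_exp_I_mul_ofReal_sub_one_le_two_mul_rpow {ε : ℝ} (hε0 : 0 ≤ ε) (hε1 : ε ≤ 1)
    (x : ℝ) : ‖exp (I * x) - 1‖ ≤ 2 * |x| ^ ε := by
  rcases le_total |x| 1 with hx | hx
  · calc ‖exp (I * x) - 1‖ ≤ |x| := Real.norm_exp_I_mul_ofReal_sub_one_le
      _ ≤ |x| ^ ε := Real.self_le_rpow_of_le_one (abs_nonneg x) hx hε1
      _ ≤ 2 * |x| ^ ε := by linarith [Real.rpow_nonneg (abs_nonneg x) ε]
  · calc ‖exp (I * x) - 1‖ ≤ ‖exp (I * x)‖ + ‖(1 : ℂ)‖ := norm_sub_le _ _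
      _ = 2 := by rw [mul_comm, norm_exp_ofReal_mul_I]; norm_num
      _ ≤ 2 * |x| ^ ε := by linarith [Real.one_le_rpow hx hε0]

lemma norm_exp_I_mul_ofReal_sub_one_sub_le (x : ℝ) :
    ‖exp (I * x) - 1 - I * x‖ ≤ 2 * x ^ 2 := by
  have hIx : ‖I * x‖ = |x| := by simp
  rcases le_total |x| 1 with hx | hx
  · have := norm_exp_sub_one_sub_id_le (x := I * x) (hIx ▸ hx)
    rw [hIx, sq_abs] at this
    linarith [sq_nonneg x]
  · calc ‖exp (I * x) - 1 - I * x‖ ≤ ‖exp (I * x) - 1‖ + ‖I * x‖ := norm_sub_le _ _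
      _ ≤ |x| + |x| := by rw [hIx]; gcongr; exact Real.norm_exp_I_mul_ofReal_sub_one_le
      _ ≤ 2 * x ^ 2 := by nlinarith [sq_abs x]

lemma norm_levyIntegrand_le {ε : ℝ} (hε0 : 0 ≤ ε) (hε1 : ε ≤ 1) (ξ t : ℝ) :
    ‖levyIntegrand ξ t‖ ≤ 2 * ξ ^ 2 * min 1 (t ^ 2) +
      {t : ℝ | 1 ≤ |t|}.indicator (fun t => 2 * |ξ| ^ ε * |t| ^ ε) t := by
  have hξt : I * ξ * t = I * ↑(ξ * t) := by push_cast; ring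
  by_cases ht : |t| < 1
  · have hmin : min 1 (t ^ 2) = t ^ 2 := min_eq_right (by nlinarith [sq_abs t, abs_nonneg t])
    have hout : t ∉ {t : ℝ | 1 ≤ |t|} := by simpa using ht
    simp only [levyIntegrand, if_pos ht, mul_one, hmin, Set.indicator_of_notMem hout, add_zero,
      hξt]
    calc _ ≤ 2 * (ξ * t) ^ 2 := norm_exp_I_mul_ofReal_sub_one_sub_le (ξ * t)
      _ = 2 * ξ ^ 2 * t ^ 2 := by ring
  · have hin : t ∈ {t : ℝ | 1 ≤ |t|} := by simpa using ht
    simp only [levyIntegrand, if_neg ht, mul_zero, sub_zero, Set.indicator_of_mem hin, hξt]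
    have hmin : 0 ≤ 2 * ξ ^ 2 * min 1 (t ^ 2) := by positivity
    calc _ ≤ 2 * |ξ * t| ^ ε := norm_exp_I_mul_ofReal_sub_one_le_two_mul_rpow hε0 hε1 (ξ * t)
      _ = 2 * |ξ| ^ ε * |t| ^ ε := by
        rw [abs_mul, Real.mul_rpow (abs_nonneg _) (abs_nonneg _)]; ring
      _ ≤ _ := le_add_of_nonneg_left hmin

lemma lintegral_enorm_levyIntegrand_le (ν : Measure ℝ) {ε : ℝ} (hε0 : 0 ≤ ε) (hε1 : ε ≤ 1)
    (ξ : ℝ) :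
    ∫⁻ t, ‖levyIntegrand ξ t‖ₑ ∂ν ≤
      ENNReal.ofReal (2 * ξ ^ 2) * ∫⁻ t, ENNReal.ofReal (min 1 (t ^ 2)) ∂ν +
      ENNReal.ofReal (2 * |ξ| ^ ε) * ∫⁻ t in {t : ℝ | 1 ≤ |t|}, ENNReal.ofReal (|t| ^ ε) ∂ν := by
  have hS : MeasurableSet {t : ℝ | 1 ≤ |t|} := measurableSet_le measurable_const measurable_abs
  have hsmall : Measurable fun t : ℝ => ENNReal.ofReal (min 1 (t ^ 2)) := by fun_prop
  have hlarge : Measurable fun t : ℝ => ENNReal.ofReal (|t| ^ ε) := by fun_prop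
  calc ∫⁻ t, ‖levyIntegrand ξ t‖ₑ ∂ν
      ≤ ∫⁻ t, (ENNReal.ofReal (2 * ξ ^ 2) * ENNReal.ofReal (min 1 (t ^ 2)) +
          {t : ℝ | 1 ≤ |t|}.indicator
            (fun t => ENNReal.ofReal (2 * |ξ| ^ ε) * ENNReal.ofReal (|t| ^ ε)) t) ∂ν := by
        refine lintegral_mono fun t => ?_
        rw [← ofReal_norm, ← ENNReal.ofReal_mul (by positivity)]
        refine (ENNReal.ofReal_le_ofReal (norm_levyIntegrand_le hε0 hε1 ξ t)).trans ?_
        refine ENNReal.ofReal_add_le.trans_eq ?_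
        congr 1
        by_cases ht : t ∈ {t : ℝ | 1 ≤ |t|}
        · simp only [Set.indicator_of_mem ht,
            ← ENNReal.ofReal_mul (by positivity : 0 ≤ 2 * |ξ| ^ ε)]
        · simp only [Set.indicator_of_notMem ht, ENNReal.ofReal_zero]
    _ = _ := by
        rw [lintegral_add_left (hsmall.const_mul _), lintegral_const_mul _ hsmall,
          lintegral_indicator hS, lintegral_const_mul _ hlarge]

lemma norm_integral_levyIntegrand_le (ν : Measure ℝ) {ε : ℝ} (hε0 : 0 ≤ ε) (hε1 : ε ≤ 1)
    (hνlevy : (∫⁻ t : ℝ, ENNReal.ofReal (min 1 (t ^ 2)) ∂ν) < ⊤)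
    (hmom : (∫⁻ t in {t : ℝ | 1 ≤ |t|}, ENNReal.ofReal (|t| ^ ε) ∂ν) < ⊤) (ξ : ℝ) :
    ‖∫ t, levyIntegrand ξ t ∂ν‖ ≤
      2 * |ξ| ^ 2 * (∫⁻ t : ℝ, ENNReal.ofReal (min 1 (t ^ 2)) ∂ν).toReal +
      2 * |ξ| ^ ε * (∫⁻ t in {t : ℝ | 1 ≤ |t|}, ENNReal.ofReal (|t| ^ ε) ∂ν).toReal := by
  calc _ ≤ (∫⁻ t, ‖levyIntegrand ξ t‖ₑ ∂ν).toReal := by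
        simpa only [ofReal_norm] using norm_integral_le_lintegral_norm (levyIntegrand ξ)
    _ ≤ _ := ENNReal.toReal_mono (by finiteness) (lintegral_enorm_levyIntegrand_le ν hε0 hε1 ξ)
    _ = _ := by
      rw [ENNReal.toReal_add (by finiteness) (by finiteness), ENNReal.toReal_mul,
        ENNReal.toReal_mul, ENNReal.toReal_ofReal (by positivity),
        ENNReal.toReal_ofReal (by positivity), sq_abs]

lemma abs_le_rpow_add_sq {ε : ℝ} (hε1 : ε ≤ 1) (x : ℝ) : |x| ≤ |x| ^ ε + |x| ^ 2 := by
  rcases le_total |x| 1 with hx | hx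
  · linarith [Real.self_le_rpow_of_le_one (abs_nonneg x) hx hε1, sq_nonneg |x|]
  · nlinarith [Real.rpow_nonneg (abs_nonneg x) ε]

theorem charExponent_bound_general
    (ν : Measure ℝ)
    (hνlevy : (∫⁻ t : ℝ, ENNReal.ofReal (min 1 (t ^ 2)) ∂ν) < ⊤)
    (μ : ℝ) (σ2 : ℝ)
    (ε : ℝ) (hε0 : 0 < ε) (hε1 : ε ≤ 1)
    (hmom : (∫⁻ t in {t : ℝ | 1 ≤ |t|}, ENNReal.ofReal (|t| ^ ε) ∂ν) < ⊤)
    (Ψ : ℝ → ℂ)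
    (hΨ : ∀ ξ : ℝ, Ψ ξ = Complex.I * μ * ξ - σ2 * ξ ^ 2 / 2 +
      ∫ t : ℝ, (Complex.exp (Complex.I * ξ * t) - 1 -
        Complex.I * ξ * t * (if |t| < 1 then 1 else 0)) ∂ν) :
    ∃ C : ℝ, 0 < C ∧ ∀ ξ : ℝ, ‖Ψ ξ‖ ≤ C * (|ξ| ^ ε + |ξ| ^ 2) := by
  set A := (∫⁻ t : ℝ, ENNReal.ofReal (min 1 (t ^ 2)) ∂ν).toReal
  set B := (∫⁻ t in {t : ℝ | 1 ≤ |t|}, ENNReal.ofReal (|t| ^ ε) ∂ν).toReal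
  have hA : 0 ≤ A := ENNReal.toReal_nonneg
  have hB : 0 ≤ B := ENNReal.toReal_nonneg
  refine ⟨|μ| + |σ2| / 2 + 2 * A + 2 * B + 1, by positivity, fun ξ => ?_⟩
  have hjump := norm_integral_levyIntegrand_le ν hε0.le hε1 hνlevy hmom ξ
  have hdrift : ‖I * μ * ξ‖ = |μ| * |ξ| := by simp
  have hdiff : ‖(σ2 : ℂ) * ξ ^ 2 / 2‖ = |σ2| * |ξ| ^ 2 / 2 := by simp
  have hε : 0 ≤ |ξ| ^ ε := Real.rpow_nonneg (abs_nonneg ξ) ε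
  have hξ := abs_le_rpow_add_sq hε1 ξ
  rw [hΨ ξ]
  calc _ ≤ ‖I * μ * ξ‖ + ‖(σ2 : ℂ) * ξ ^ 2 / 2‖ + ‖∫ t, levyIntegrand ξ t ∂ν‖ :=
        (norm_add_le _ _).trans (add_le_add_left (norm_sub_le _ _) _)
    _ ≤ _ := by
        rw [hdrift, hdiff]
        nlinarith [mul_le_mul_of_nonneg_left hξ (abs_nonneg μ), mul_nonneg hA (sq_nonneg |ξ|),
          mul_nonneg hB hε, abs_nonneg σ2, sq_nonneg |ξ|]

/-- If `ν` is a Lévy measure admitting a finite `ε`-moment at infinity for some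
`0 < ε ≤ 1`, then the characteristic exponent
`Ψ(ξ) = iμξ − σ²ξ²/2 + ∫ (e^{iξt} − 1 − iξt 1_{|t|<1}) ν(dt)` satisfies
`|Ψ(ξ)| ≤ C(|ξ|^ε + |ξ|²)` for some `C > 0` and all `ξ ∈ ℝ`. -/
theorem charExponent_bound
    (ν : Measure ℝ) (hν0 : ν {0} = 0)
    (hνlevy : (∫⁻ t : ℝ, ENNReal.ofReal (min 1 (t ^ 2)) ∂ν) < ⊤)
    (μ : ℝ) (σ2 : ℝ) (hσ2 : 0 ≤ σ2)
    (ε : ℝ) (hε0 : 0 < ε) (hε1 : ε ≤ 1)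
    (hmom : (∫⁻ t in {t : ℝ | 1 ≤ |t|}, ENNReal.ofReal (|t| ^ ε) ∂ν) < ⊤)
    (Ψ : ℝ → ℂ)
    (hΨ : ∀ ξ : ℝ, Ψ ξ = Complex.I * μ * ξ - σ2 * ξ ^ 2 / 2 +
      ∫ t : ℝ, (Complex.exp (Complex.I * ξ * t) - 1 -
        Complex.I * ξ * t * (if |t| < 1 then 1 else 0)) ∂ν) :
    ∃ C : ℝ, 0 < C ∧ ∀ ξ : ℝ, ‖Ψ ξ‖ ≤ C * (|ξ| ^ ε + |ξ| ^ 2) :=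
  charExponent_bound_general ν hνlevy μ σ2 ε hε0 hε1 hmom Ψ hΨ
end
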